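/- arXiv:2204.07245 — 3 statements merged into one kernel-verified Lean document; each statement's English description precedes it below -/
import Mathlib

section
/- Let ρ be a Borel measure on (0, +∞) with 0 < ∫₀^∞ (v² ∧ v) ρ(dv) < +∞ and let J_ρ(b) = ∫₀^∞ (e^{−bv} − 1 + bv) ρ(dv) for b ≥ 0. Assume there exist β > 1, γ > 1 with ln β / ln γ irrational, and η > 1, θ > 1, such that J_ρ(β·b) = η·J_ρ(b) and J_ρ(γ·b) = θ·J_ρ(b) for all b ≥ 0. Then there exist C > 0 and α ∈ (1, 2) such that J_ρ(b) = C·b^α for all b ≥ 0. -/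
/-!
With `φ x = exp (-x) - 1 + x` (`compensatedExpNeg`), the pointwise inequalities
`l φ x < φ (l x) < l² φ x` for `l > 1`, `x > 0` integrate to `β J 1 < J β < β² J 1`, which pins
the exponent in `(1, 2)`. For the power law itself, pass to `g t = log J (exp t)`: the two
scaling relations say that `g` has constant increments along `log β` and `log γ`, so
`k t = g t - α t`, with `α = log η / log β`, is continuous and `log β`-periodic, hence bounded,
which forces its increment along `log γ` to vanish as well. A continuous function with two
incommensurable periods is constant, since the periods generate a dense subgroup of `ℝ`.
-/

open Real Filter Set MeasureTheory

noncomputable def compensatedExpNeg (x : ℝ) : ℝ := exp (-x) - 1 + x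

@[fun_prop]
theorem continuous_compensatedExpNeg : Continuous compensatedExpNeg := by
  unfold compensatedExpNeg; fun_prop

@[simp] theorem compensatedExpNeg_zero : compensatedExpNeg 0 = 0 := by simp [compensatedExpNeg]

theorem compensatedExpNeg_pos {x : ℝ} (hx : x ≠ 0) : 0 < compensatedExpNeg x := by
  have := add_one_lt_exp (neg_ne_zero.mpr hx); unfold compensatedExpNeg; linarith

theorem compensatedExpNeg_nonneg (x : ℝ) : 0 ≤ compensatedExpNeg x := by
  have := add_one_le_exp (-x); unfold compensatedExpNeg; linarith

theorem compensatedExpNeg_le_self {x : ℝ} (hx : 0 ≤ x) : compensatedExpNeg x ≤ x := by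
  have := exp_le_one_iff.mpr (neg_nonpos.mpr hx); unfold compensatedExpNeg; linarith

theorem compensatedExpNeg_le_sq {x : ℝ} (hx : 0 ≤ x) : compensatedExpNeg x ≤ x ^ 2 := by
  rcases le_total x 1 with hx1 | hx1
  · have := abs_exp_sub_one_sub_id_le (x := -x) (by rwa [abs_neg, abs_of_nonneg hx])
    unfold compensatedExpNeg
    rw [neg_sq] at this
    linarith [le_abs_self (exp (-x) - 1 - -x)]
  · nlinarith [compensatedExpNeg_le_self hx]

theorem compensatedExpNeg_mul_le {b v : ℝ} (hb : 0 ≤ b) (hv : 0 ≤ v) :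
    compensatedExpNeg (b * v) ≤ max (b ^ 2) b * min (v ^ 2) v := by
  have hbv : 0 ≤ b * v := mul_nonneg hb hv
  rw [mul_min_of_nonneg _ _ (le_max_of_le_right hb)]
  refine le_min ((compensatedExpNeg_le_sq hbv).trans ?_)
    ((compensatedExpNeg_le_self hbv).trans ?_)
  · rw [mul_pow]; gcongr; exact le_max_left _ _
  · gcongr; exact le_max_right _ _

/-- Bernoulli's inequality for `exp (-x) < 1`, raised to the power `l`. -/
theorem exp_neg_mul_sub_mul_exp_neg_pos {l x : ℝ} (hl : 1 < l) (hx : 0 < x) :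
    0 < exp (-(l * x)) - l * exp (-x) + l - 1 := by
  have hu := one_add_mul_self_lt_rpow_one_add (s := exp (-x) - 1) (by linarith [exp_pos (-x)])
    (sub_ne_zero.mpr (exp_lt_one_iff.mpr (neg_lt_zero.mpr hx)).ne) hl
  rw [add_sub_cancel, ← exp_mul, neg_mul, mul_comm x] at hu
  linarith

theorem mul_compensatedExpNeg_lt {l x : ℝ} (hl : 1 < l) (hx : 0 < x) :
    l * compensatedExpNeg x < compensatedExpNeg (l * x) := by
  have := exp_neg_mul_sub_mul_exp_neg_pos hl hx; unfold compensatedExpNeg; linarith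

theorem hasDerivAt_compensatedExpNeg (x : ℝ) :
    HasDerivAt compensatedExpNeg (1 - exp (-x)) x :=
  (((hasDerivAt_neg' x).exp.sub_const 1).add (hasDerivAt_id' x)).congr_deriv (by ring)

theorem compensatedExpNeg_mul_lt_sq_mul {l x : ℝ} (hl : 1 < l) (hx : 0 < x) :
    compensatedExpNeg (l * x) < l ^ 2 * compensatedExpNeg x := by
  let h : ℝ → ℝ := fun y => l ^ 2 * compensatedExpNeg y - compensatedExpNeg (l * y)
  have hderiv : ∀ y, HasDerivAt h (l * (exp (-(l * y)) - l * exp (-y) + l - 1)) y := fun y =>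
    (((hasDerivAt_compensatedExpNeg y).const_mul (l ^ 2)).sub
      ((hasDerivAt_compensatedExpNeg (l * y)).comp y ((hasDerivAt_id' y).const_mul l))).congr_deriv
      (by ring)
  have hmono : StrictMonoOn h (Ici 0) :=
    strictMonoOn_of_hasDerivWithinAt_pos (convex_Ici 0)
      (fun y _ => (hderiv y).continuousAt.continuousWithinAt)
      (fun y _ => (hderiv y).hasDerivWithinAt)
      (fun y hy => by
        rw [interior_Ici] at hy
        exact mul_pos (by linarith) (exp_neg_mul_sub_mul_exp_neg_pos hl hy))
  have := hmono (mem_Ici.mpr le_rfl) hx.le hx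
  simp only [h, mul_zero, compensatedExpNeg_zero, sub_zero] at this
  linarith

theorem setIntegral_lt_setIntegral_of_forall_lt {X : Type*} [MeasurableSpace X] {μ : Measure X}
    {s : Set X} {f g : X → ℝ} (hs : MeasurableSet s) (hμ : μ s ≠ 0) (hf : IntegrableOn f s μ)
    (hg : IntegrableOn g s μ) (hlt : ∀ x ∈ s, f x < g x) :
    ∫ x in s, f x ∂μ < ∫ x in s, g x ∂μ := by
  rw [← sub_pos, ← integral_sub hg hf, setIntegral_pos_iff_support_of_nonneg_ae
    ((ae_restrict_iff' hs).mpr (ae_of_all _ fun x hx => (sub_pos.mpr (hlt x hx)).le)) (hg.sub hf)]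
  exact (pos_iff_ne_zero.mpr hμ).trans_le
    (measure_mono fun x hx => ⟨(sub_pos.mpr (hlt x hx)).ne', hx⟩)

section LevyMeasure

variable {ρ : Measure ℝ}

theorem integrableOn_min_sq_self
    (hfin : ∫⁻ v in Ioi (0:ℝ), ENNReal.ofReal (min (v ^ 2) v) ∂ρ < ⊤) :
    IntegrableOn (fun v => min (v ^ 2) v) (Ioi 0) ρ :=
  ⟨(by fun_prop : Continuous fun v : ℝ => min (v ^ 2) v).aestronglyMeasurable,
    (hasFiniteIntegral_iff_ofReal ((ae_restrict_iff' measurableSet_Ioi).mpr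
      (ae_of_all _ fun v (hv : 0 < v) => le_min (sq_nonneg v) hv.le))).mpr hfin⟩

theorem integrableOn_compensatedExpNeg_mul
    (hfin : ∫⁻ v in Ioi (0:ℝ), ENNReal.ofReal (min (v ^ 2) v) ∂ρ < ⊤) {b : ℝ} (hb : 0 ≤ b) :
    IntegrableOn (fun v => compensatedExpNeg (b * v)) (Ioi 0) ρ := by
  refine ((integrableOn_min_sq_self hfin).const_mul (max (b ^ 2) b)).mono'
    (by fun_prop : Continuous fun v => compensatedExpNeg (b * v)).aestronglyMeasurable
    ((ae_restrict_iff' measurableSet_Ioi).mpr (ae_of_all _ fun v (hv : 0 < v) => ?_))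
  rw [norm_of_nonneg (compensatedExpNeg_nonneg _)]
  exact compensatedExpNeg_mul_le hb hv.le

theorem continuousOn_integral_compensatedExpNeg_mul
    (hfin : ∫⁻ v in Ioi (0:ℝ), ENNReal.ofReal (min (v ^ 2) v) ∂ρ < ⊤) :
    ContinuousOn (fun b => ∫ v in Ioi 0, compensatedExpNeg (b * v) ∂ρ) (Ioi 0) := by
  intro b₀ hb₀
  set M := b₀ + 1
  refine ContinuousAt.continuousWithinAt <|
    continuousAt_of_dominated (bound := fun v => max (M ^ 2) M * min (v ^ 2) v)
      (Eventually.of_forall fun b => Continuous.aestronglyMeasurable (by fun_prop))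
      ?_ ((integrableOn_min_sq_self hfin).const_mul _)
      (ae_of_all _ fun v => Continuous.continuousAt (by fun_prop))
  filter_upwards [Ioo_mem_nhds hb₀ (lt_add_one b₀)] with b hb
  refine (ae_restrict_iff' measurableSet_Ioi).mpr (ae_of_all _ fun v (hv : 0 < v) => ?_)
  rw [norm_of_nonneg (compensatedExpNeg_nonneg _)]
  refine (compensatedExpNeg_mul_le hb.1.le hv.le).trans ?_
  exact mul_le_mul_of_nonneg_right (max_le_max (pow_le_pow_left₀ hb.1.le hb.2.le 2) hb.2.le)
    (le_min (sq_nonneg v) hv.le)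

variable (hρ : ρ (Ioi 0) ≠ 0) (hfin : ∫⁻ v in Ioi (0:ℝ), ENNReal.ofReal (min (v ^ 2) v) ∂ρ < ⊤)
include hρ hfin

theorem integral_compensatedExpNeg_mul_pos {b : ℝ} (hb : 0 < b) :
    0 < ∫ v in Ioi 0, compensatedExpNeg (b * v) ∂ρ := by
  simpa using setIntegral_lt_setIntegral_of_forall_lt measurableSet_Ioi hρ integrableOn_zero
    (integrableOn_compensatedExpNeg_mul hfin hb.le)
    fun v (hv : 0 < v) => compensatedExpNeg_pos (mul_pos hb hv).ne'

theorem mul_integral_compensatedExpNeg_mul_lt {l b : ℝ} (hl : 1 < l) (hb : 0 < b) :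
    l * ∫ v in Ioi 0, compensatedExpNeg (b * v) ∂ρ <
      ∫ v in Ioi 0, compensatedExpNeg (l * b * v) ∂ρ := by
  rw [← integral_const_mul]
  exact setIntegral_lt_setIntegral_of_forall_lt measurableSet_Ioi hρ
    ((integrableOn_compensatedExpNeg_mul hfin hb.le).const_mul l)
    (integrableOn_compensatedExpNeg_mul hfin (by positivity))
    fun v (hv : 0 < v) => by rw [mul_assoc]; exact mul_compensatedExpNeg_lt hl (mul_pos hb hv)

theorem integral_compensatedExpNeg_mul_lt_sq_mul {l b : ℝ} (hl : 1 < l) (hb : 0 < b) :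
    ∫ v in Ioi 0, compensatedExpNeg (l * b * v) ∂ρ <
      l ^ 2 * ∫ v in Ioi 0, compensatedExpNeg (b * v) ∂ρ := by
  rw [← integral_const_mul]
  exact setIntegral_lt_setIntegral_of_forall_lt measurableSet_Ioi hρ
    (integrableOn_compensatedExpNeg_mul hfin (by positivity))
    ((integrableOn_compensatedExpNeg_mul hfin hb.le).const_mul _)
    fun v (hv : 0 < v) => by
      rw [mul_assoc]; exact compensatedExpNeg_mul_lt_sq_mul hl (mul_pos hb hv)

end LevyMeasure

theorem eq_zero_of_add_const_of_isBounded {f : ℝ → ℝ} {q c : ℝ}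
    (hf : Bornology.IsBounded (range f)) (h : ∀ t, f (t + q) = f t + c) : c = 0 := by
  obtain ⟨M, hM⟩ := hf.exists_norm_le
  have hmul : ∀ n : ℕ, f (n * q) = f 0 + n * c := by
    intro n
    induction n with
    | zero => simp
    | succ n ih => rw [Nat.cast_succ, add_mul, one_mul, h, ih]; ring
  by_contra hc
  obtain ⟨n, hn⟩ := exists_nat_gt ((M + M) / |c|)
  have hbound : |(n : ℝ) * c| ≤ M + M := by
    rw [show (n : ℝ) * c = f (n * q) - f 0 by rw [hmul]; ring]
    exact (abs_sub _ _).trans (add_le_add (hM _ ⟨_, rfl⟩) (hM _ ⟨_, rfl⟩))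
  rw [abs_mul, Nat.abs_cast, ← le_div_iff₀ (abs_pos.mpr hc)] at hbound
  linarith

theorem eq_of_periodic_of_periodic {X : Type*} [TopologicalSpace X] [T2Space X] {f : ℝ → X}
    {p q : ℝ} (hf : Continuous f) (hp : Function.Periodic f p) (hq : Function.Periodic f q)
    (hirr : Irrational (p / q)) (t : ℝ) : f t = f 0 := by
  have hperiods : ∀ s ∈ AddSubgroup.closure {p, q}, Function.Periodic f s := by
    intro s hs
    induction hs using AddSubgroup.closure_induction with
    | mem s hs => rcases hs with rfl | rfl <;> assumption
    | zero => exact fun t => by rw [add_zero]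
    | add a b _ _ ha hb => exact ha.add_period hb
    | neg a _ ha => exact ha.neg
  have hconst : f = fun _ => f 0 :=
    hf.ext_on (dense_addSubgroupClosure_pair_iff.mpr hirr) continuous_const
      fun s hs => by simpa using hperiods s hs 0
  exact congrFun hconst t

theorem eq_add_mul_of_add_const_of_add_const {g : ℝ → ℝ} {p q a c : ℝ} (hg : Continuous g)
    (hirr : Irrational (p / q)) (hp : ∀ t, g (t + p) = g t + a)
    (hq : ∀ t, g (t + q) = g t + c) (t : ℝ) : g t = g 0 + a / p * t := by
  have hp0 : p ≠ 0 := by rintro rfl; simp at hirr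
  have hq0 : q ≠ 0 := by rintro rfl; simp at hirr
  set k : ℝ → ℝ := fun t => g t - a / p * t
  have hk : Continuous k := by fun_prop
  have hkp : Function.Periodic k p := fun t => by
    simp only [k, hp]; field_simp; ring
  have hkq : ∀ t, k (t + q) = k t + (c - a / p * q) := fun t => by
    simp only [k, hq]; ring
  have hc := eq_zero_of_add_const_of_isBounded (hkp.isBounded_of_continuous hp0 hk) hkq
  have hkq' : Function.Periodic k q := fun t => by rw [hkq, hc, add_zero]
  have := eq_of_periodic_of_periodic hk hkp hkq' hirr t
  simp only [k] at this
  linarith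

theorem eq_mul_rpow_of_map_mul_eq_mul {f : ℝ → ℝ} {β γ η θ : ℝ} (hf : ContinuousOn f (Ioi 0))
    (hpos : ∀ b > 0, 0 < f b) (hβ : 0 < β) (hγ : 0 < γ) (hirr : Irrational (log β / log γ))
    (hfβ : ∀ b > 0, f (β * b) = η * f b) (hfγ : ∀ b > 0, f (γ * b) = θ * f b) {b : ℝ}
    (hb : 0 < b) : f b = f 1 * b ^ (log η / log β) := by
  have hlog : ∀ {l m : ℝ}, 0 < l → (∀ b > 0, f (l * b) = m * f b) →
      ∀ t, log (f (exp (t + log l))) = log (f (exp t)) + log m := by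
    intro l m hl hfl t
    have hm : m ≠ 0 := by
      rintro rfl
      have := hpos (l * 1) (by positivity)
      rw [hfl 1 one_pos, zero_mul] at this
      exact this.false
    rw [exp_add, exp_log hl, mul_comm, hfl _ (exp_pos t),
      log_mul hm (hpos _ (exp_pos t)).ne', add_comm]
  have hg : Continuous fun t => log (f (exp t)) :=
    ContinuousOn.comp_continuous (continuousOn_log.comp hf fun b hb => (hpos b hb).ne')
      continuous_exp exp_pos
  have := eq_add_mul_of_add_const_of_add_const hg hirr (hlog hβ hfβ) (hlog hγ hfγ) (log b)
  rw [exp_log hb, exp_zero] at this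
  rw [← exp_log (hpos b hb), this, exp_add, exp_log (hpos 1 one_pos), rpow_def_of_pos hb,
    mul_comm (log b)]

theorem stmt6_general (ρ : Measure ℝ)
    (hpos : 0 < ∫⁻ v in Set.Ioi (0:ℝ), ENNReal.ofReal (min (v ^ 2) v) ∂ρ)
    (hfin : ∫⁻ v in Set.Ioi (0:ℝ), ENNReal.ofReal (min (v ^ 2) v) ∂ρ < ⊤)
    (J : ℝ → ℝ)
    (hJ : ∀ b ≥ (0:ℝ), J b = ∫ v in Set.Ioi (0:ℝ), (Real.exp (-(b * v)) - 1 + b * v) ∂ρ)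
    (β γ η θ : ℝ) (hβ : 1 < β) (hγ : 1 < γ)
    (hirr : Irrational (Real.log β / Real.log γ))
    (heqβ : ∀ b ≥ (0:ℝ), J (β * b) = η * J b)
    (heqγ : ∀ b ≥ (0:ℝ), J (γ * b) = θ * J b) :
    ∃ C > (0:ℝ), ∃ α ∈ Set.Ioo (1:ℝ) 2, ∀ b ≥ (0:ℝ), J b = C * b ^ α := by
  have hJ' : ∀ b ≥ (0:ℝ), J b = ∫ v in Ioi 0, compensatedExpNeg (b * v) ∂ρ := hJ
  have hρ : ρ (Ioi 0) ≠ 0 := fun h => hpos.ne' (setLIntegral_measure_zero _ _ h)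
  have hJpos : ∀ b > 0, 0 < J b := fun b hb =>
    hJ' b hb.le ▸ integral_compensatedExpNeg_mul_pos hρ hfin hb
  have hJcont : ContinuousOn J (Ioi 0) :=
    (continuousOn_integral_compensatedExpNeg_mul hfin).congr fun b hb => hJ' b (le_of_lt hb)
  set α := log η / log β
  have hpow : ∀ b > 0, J b = J 1 * b ^ α := fun b hb =>
    eq_mul_rpow_of_map_mul_eq_mul hJcont hJpos (by linarith) (by linarith) hirr
      (fun b hb => heqβ b hb.le) (fun b hb => heqγ b hb.le) hb
  have hlower : β * J 1 < J β := by
    simpa only [hJ' 1 zero_le_one, hJ' β (by linarith), mul_one, one_mul] using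
      mul_integral_compensatedExpNeg_mul_lt hρ hfin hβ one_pos
  have hupper : J β < β ^ 2 * J 1 := by
    simpa only [hJ' 1 zero_le_one, hJ' β (by linarith), mul_one, one_mul] using
      integral_compensatedExpNeg_mul_lt_sq_mul hρ hfin hβ one_pos
  rw [hpow β (by linarith)] at hlower hupper
  have hJ1 := hJpos 1 one_pos
  have hα1 : 1 < α := by rw [← rpow_lt_rpow_left_iff hβ, rpow_one]; nlinarith
  have hα2 : α < 2 := by rw [← rpow_lt_rpow_left_iff hβ, rpow_two]; nlinarith
  refine ⟨J 1, hJ1, α, ⟨hα1, hα2⟩, fun b hb => ?_⟩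
  rcases hb.eq_or_lt with rfl | hb
  · rw [hJ' 0 le_rfl, zero_rpow (by linarith)]; simp
  · exact hpow b hb

/-- If `J_ρ` (the compensated Laplace exponent of a nonzero Lévy measure `ρ` on `(0,∞)`
with `∫ (v² ∧ v) ρ(dv) < ∞`) satisfies `J_ρ(βb) = η J_ρ(b)` and `J_ρ(γb) = θ J_ρ(b)`
for all `b ≥ 0`, with `β, γ, η, θ > 1` and `ln β / ln γ` irrational, then
`J_ρ(b) = C·b^α` for some `C > 0` and `α ∈ (1,2)`. -/
theorem stmt6 (ρ : Measure ℝ)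
    (hpos : 0 < ∫⁻ v in Set.Ioi (0:ℝ), ENNReal.ofReal (min (v ^ 2) v) ∂ρ)
    (hfin : ∫⁻ v in Set.Ioi (0:ℝ), ENNReal.ofReal (min (v ^ 2) v) ∂ρ < ⊤)
    (J : ℝ → ℝ)
    (hJ : ∀ b ≥ (0:ℝ), J b = ∫ v in Set.Ioi (0:ℝ), (Real.exp (-(b * v)) - 1 + b * v) ∂ρ)
    (β γ η θ : ℝ) (hβ : 1 < β) (hγ : 1 < γ)
    (hirr : Irrational (Real.log β / Real.log γ))
    (hη : 1 < η) (hθ : 1 < θ)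
    (heqβ : ∀ b ≥ (0:ℝ), J (β * b) = η * J b)
    (heqγ : ∀ b ≥ (0:ℝ), J (γ * b) = θ * J b) :
    ∃ C > (0:ℝ), ∃ α ∈ Set.Ioo (1:ℝ) 2, ∀ b ≥ (0:ℝ), J b = C * b ^ α :=
  stmt6_general ρ hpos hfin J hJ β γ η θ hβ hγ hirr heqβ heqγ
end

section
/- Let μ be a Borel measure on (0, +∞) with ∫₀^∞ (v ∧ v²) μ(dv) < +∞, let J_μ(b) = ∫₀^∞ (e^{−bv} − 1 + bv) μ(dv), and let c ≥ 0. Suppose that c·b² + J_μ(b) = Σ_{k=1}^g η_k·b^{α_k} for all b ≥ 0, where g ≥ 1, η_k > 0 and α_1, …, α_g ∈ (1, 2] are pairwise distinct with α_1 > α_2 > … > α_g. Then: (i) if α_1 = 2 then c = η_1 and J_μ(b) = Σ_{k=2}^g η_k·b^{α_k} (so every power actually appearing in J_μ has exponent in (1, 2)); (ii) if α_1 < 2 then c = 0 and J_μ(b) = Σ_{k=1}^g η_k·b^{α_k}. In particular, J_μ is a finite sum of powers b^{α} with exponents α strictly between 1 and 2 and positive coefficients (possibly the empty sum, i.e.,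 J_μ ≡ 0). -/
/-!
Dividing the identity by `b²` and letting `b → ∞`, the left side tends to `c` because
`J_μ(b)/b² → 0` (dominated convergence: the integrand divided by `b²` is at most
`min (v / b) (v ^ 2)`), while every term `η_k b^{α_k - 2}` with `α_k < 2` tends to `0`.
Hence `c` equals the coefficient of `b²` on the right, and cancelling `c b²` leaves `J_μ`.
-/

open Real Filter Set MeasureTheory Topology

lemma exp_neg_sub_one_add_nonneg (x : ℝ) : 0 ≤ exp (-x) - 1 + x := by
  linarith [add_one_le_exp (-x)]

lemma exp_neg_sub_one_add_le_self {x : ℝ} (hx : 0 ≤ x) : exp (-x) - 1 + x ≤ x := by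
  linarith [exp_le_one_iff.mpr (neg_nonpos.mpr hx)]

lemma exp_neg_sub_one_add_le_sq {x : ℝ} (hx : 0 ≤ x) : exp (-x) - 1 + x ≤ x ^ 2 := by
  rcases le_or_gt x 1 with hx1 | hx1
  · have h := abs_exp_sub_one_sub_id_le (x := -x) (by rwa [abs_neg, abs_of_nonneg hx])
    linarith [(abs_le.mp h).2, neg_sq x]
  · nlinarith [exp_neg_sub_one_add_le_self hx]

lemma exp_neg_mul_sub_one_add_div_sq_le {b v : ℝ} (hb : 0 < b) (hv : 0 ≤ v) :
    (exp (-(b * v)) - 1 + b * v) / b ^ 2 ≤ min (v / b) (v ^ 2) := by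
  have hbv : 0 ≤ b * v := by positivity
  refine le_min ?_ ?_
  · calc (exp (-(b * v)) - 1 + b * v) / b ^ 2 ≤ b * v / b ^ 2 := by
          gcongr; exact exp_neg_sub_one_add_le_self hbv
      _ = v / b := by field_simp
  · calc (exp (-(b * v)) - 1 + b * v) / b ^ 2 ≤ (b * v) ^ 2 / b ^ 2 := by
          gcongr; exact exp_neg_sub_one_add_le_sq hbv
      _ = v ^ 2 := by field_simp

theorem tendsto_integral_exp_neg_mul_sub_one_add_div_sq {ν : Measure ℝ}
    (hpos : ∀ᵐ v ∂ν, 0 ≤ v) (hint : Integrable (fun v ↦ min v (v ^ 2)) ν) :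
    Tendsto (fun b ↦ (∫ v, (exp (-(b * v)) - 1 + b * v) ∂ν) / b ^ 2) atTop (𝓝 0) := by
  have hlim : Tendsto (fun b ↦ ∫ v, (exp (-(b * v)) - 1 + b * v) / b ^ 2 ∂ν) atTop
      (𝓝 (∫ _, (0 : ℝ) ∂ν)) := by
    refine tendsto_integral_filter_of_dominated_convergence _ ?_ ?_ hint ?_
    · exact .of_forall fun b ↦ (by fun_prop : Continuous _).aestronglyMeasurable
    · filter_upwards [eventually_ge_atTop 1] with b hb
      filter_upwards [hpos] with v hv
      have hb0 : 0 < b := one_pos.trans_le hb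
      rw [norm_of_nonneg (div_nonneg (exp_neg_sub_one_add_nonneg _) (sq_nonneg b))]
      refine (exp_neg_mul_sub_one_add_div_sq_le hb0 hv).trans (min_le_min_right _ ?_)
      exact div_le_self hv hb
    · filter_upwards [hpos] with v hv
      refine squeeze_zero' (g := fun b ↦ v / b) ?_ ?_ (tendsto_const_nhds.div_atTop tendsto_id)
      · exact .of_forall fun b ↦ div_nonneg (exp_neg_sub_one_add_nonneg _) (sq_nonneg b)
      · filter_upwards [eventually_gt_atTop 0] with b hb
        exact (exp_neg_mul_sub_one_add_div_sq_le hb hv).trans (min_le_left _ _)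
  simpa only [integral_zero, integral_div] using hlim

lemma integrable_min_sq_of_lintegral_lt_top {μ : Measure ℝ}
    (hμ : ∫⁻ v in Ioi (0 : ℝ), ENNReal.ofReal (min v (v ^ 2)) ∂μ < ⊤) :
    Integrable (fun v ↦ min v (v ^ 2)) (μ.restrict (Ioi 0)) := by
  refine ⟨(by fun_prop : Continuous fun v : ℝ ↦ min v (v ^ 2)).aestronglyMeasurable, ?_⟩
  refine (hasFiniteIntegral_iff_ofReal ?_).mpr hμ
  filter_upwards [ae_restrict_mem measurableSet_Ioi] with v (hv : 0 < v)
  exact le_min hv.le (sq_nonneg v)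

lemma tendsto_sum_mul_rpow_atTop_zero {ι : Type*} (s : Finset ι) (η β : ι → ℝ)
    (hβ : ∀ k ∈ s, β k < 0) :
    Tendsto (fun b : ℝ ↦ ∑ k ∈ s, η k * b ^ β k) atTop (𝓝 0) := by
  have h := tendsto_finsetSum s fun k hk ↦
    (tendsto_rpow_neg_atTop (neg_pos.mpr (hβ k hk))).const_mul (η k)
  simpa only [neg_neg, mul_zero, Finset.sum_const_zero] using h

lemma eq_zero_of_mul_sq_add_eq_sum_rpow {ι : Type*} {f : ℝ → ℝ} {d : ℝ} {s : Finset ι}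
    {η α : ι → ℝ} (hf : Tendsto (fun b ↦ f b / b ^ 2) atTop (𝓝 0))
    (hα : ∀ k ∈ s, α k < 2)
    (heq : ∀ᶠ b in atTop, d * b ^ 2 + f b = ∑ k ∈ s, η k * b ^ α k) : d = 0 := by
  have hsum := tendsto_sum_mul_rpow_atTop_zero s η (fun k ↦ α k - 2)
    fun k hk ↦ sub_neg.mpr (hα k hk)
  have hlhs : Tendsto (fun b ↦ d + f b / b ^ 2) atTop (𝓝 d) := by
    simpa using hf.const_add d
  refine tendsto_nhds_unique (hlhs.congr' ?_) hsum
  filter_upwards [heq, eventually_gt_atTop 0] with b hb hb0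
  rw [add_div' _ _ _ (by positivity), hb, Finset.sum_div]
  refine Finset.sum_congr rfl fun k _ ↦ ?_
  rw [rpow_sub hb0, rpow_two, mul_div_assoc]

theorem stmt9_general (μ : Measure ℝ)
    (hμ : ∫⁻ v in Set.Ioi (0:ℝ), ENNReal.ofReal (min v (v ^ 2)) ∂μ < ⊤)
    (Jμ : ℝ → ℝ)
    (hJμ : ∀ b ≥ (0:ℝ), Jμ b = ∫ v in Set.Ioi (0:ℝ), (Real.exp (-(b * v)) - 1 + b * v) ∂μ)
    (c : ℝ)
    (g : ℕ) (hg : 1 ≤ g)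
    (η α : ℕ → ℝ)
    (hdec : ∀ k l, k < l → l < g → α l < α k)
    (heq : ∀ b ≥ (0:ℝ), c * b ^ 2 + Jμ b = ∑ k ∈ Finset.range g, η k * b ^ α k) :
    (α 0 = 2 → c = η 0 ∧ ∀ b ≥ (0:ℝ), Jμ b = ∑ k ∈ Finset.Ico 1 g, η k * b ^ α k) ∧
    (α 0 < 2 → c = 0 ∧ ∀ b ≥ (0:ℝ), Jμ b = ∑ k ∈ Finset.range g, η k * b ^ α k) := by
  have hJ : Tendsto (fun b ↦ Jμ b / b ^ 2) atTop (𝓝 0) := by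
    refine (tendsto_integral_exp_neg_mul_sub_one_add_div_sq
      (ae_restrict_of_forall_mem measurableSet_Ioi fun _ hv ↦ le_of_lt hv)
      (integrable_min_sq_of_lintegral_lt_top hμ)).congr' ?_
    filter_upwards [eventually_ge_atTop 0] with b hb
    rw [hJμ b hb]
  constructor
  · intro hα0
    have hsplit (b : ℝ) : ∑ k ∈ Finset.range g, η k * b ^ α k
        = η 0 * b ^ α 0 + ∑ k ∈ Finset.Ico 1 g, η k * b ^ α k := by
      rw [Finset.range_eq_Ico, Finset.sum_eq_sum_Ico_succ_bot hg]
    have hrest : ∀ b ≥ (0:ℝ), (c - η 0) * b ^ 2 + Jμ b = ∑ k ∈ Finset.Ico 1 g, η k * b ^ α k := by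
      intro b hb
      have h := heq b hb
      rw [hsplit, hα0, rpow_two] at h
      linear_combination h
    have hc : c - η 0 = 0 := eq_zero_of_mul_sq_add_eq_sum_rpow hJ
      (fun k hk ↦ hα0 ▸ hdec 0 k (Finset.mem_Ico.mp hk).1 (Finset.mem_Ico.mp hk).2)
      ((eventually_ge_atTop 0).mono hrest)
    refine ⟨by linarith, fun b hb ↦ ?_⟩
    simpa [hc] using hrest b hb
  · intro hα0
    have hc : c = 0 := eq_zero_of_mul_sq_add_eq_sum_rpow hJ
      (fun k hk ↦ (Nat.eq_zero_or_pos k).elim (fun h ↦ h ▸ hα0)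
        fun h ↦ (hdec 0 k h (Finset.mem_range.mp hk)).trans_le hα0.le)
      ((eventually_ge_atTop 0).mono heq)
    refine ⟨hc, fun b hb ↦ ?_⟩
    simpa [hc] using heq b hb

/-- Corollary on the form of `J_μ`: if `c·b² + J_μ(b) = Σ_{k<g} η_k b^{α_k}` with
`η_k > 0` and strictly decreasing exponents `α_k ∈ (1,2]`, then either `α_0 = 2`, in
which case `c = η_0` and `J_μ(b) = Σ_{1≤k<g} η_k b^{α_k}`, or `α_0 < 2`, in which case
`c = 0` and `J_μ(b) = Σ_{k<g} η_k b^{α_k}`. -/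
theorem stmt9 (μ : Measure ℝ)
    (hμ : ∫⁻ v in Set.Ioi (0:ℝ), ENNReal.ofReal (min v (v ^ 2)) ∂μ < ⊤)
    (Jμ : ℝ → ℝ)
    (hJμ : ∀ b ≥ (0:ℝ), Jμ b = ∫ v in Set.Ioi (0:ℝ), (Real.exp (-(b * v)) - 1 + b * v) ∂μ)
    (c : ℝ) (hc : 0 ≤ c)
    (g : ℕ) (hg : 1 ≤ g)
    (η α : ℕ → ℝ)
    (hη : ∀ k < g, 0 < η k)
    (hα : ∀ k < g, α k ∈ Set.Ioc (1:ℝ) 2)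
    (hdec : ∀ k l, k < l → l < g → α l < α k)
    (heq : ∀ b ≥ (0:ℝ), c * b ^ 2 + Jμ b = ∑ k ∈ Finset.range g, η k * b ^ α k) :
    (α 0 = 2 → c = η 0 ∧ ∀ b ≥ (0:ℝ), Jμ b = ∑ k ∈ Finset.Ico 1 g, η k * b ^ α k) ∧
    (α 0 < 2 → c = 0 ∧ ∀ b ≥ (0:ℝ), Jμ b = ∑ k ∈ Finset.range g, η k * b ^ α k) :=
  stmt9_general μ hμ Jμ hJμ c g hg η α hdec heq
end

section
/- Let g : (0, +∞) → [0, +∞) be measurable with ∫₀^∞ (v² ∧ v)·g(v) dv < +∞, with ∫₀^∞ v²·g(v) dv = +∞, and with g(y) > 0 for all sufficiently large y. Define J(b) = ∫₀^∞ (e^{−bv} − 1 + bv)·g(v) dv for b ≥ 0. If, for some α ∈ (1, 2), lim_{y→+∞} g(b·y)/g(y) = b^{−α−1} for every b > 0, then lim_{x→0+} J(b·x)/J(x) = b^α for every b > 0. -/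
open Real Filter Set MeasureTheory Topology

/-!
Write `φ(u) = e^{-u} - 1 + u` (`compensatedExp`) and `D(x) = x⁻¹ g(x⁻¹)`, and split `J(x)` at a
large `Y`. The part over `(0, Y]` is at most `x² ∫₀^Y v² g`, which is negligible because
`∫ v² g = ∞` forces `J(x)/x² → ∞`. After the substitution `v = w/x`, the part over `(Y, ∞)` equals
`D(x) ∫_{w > xY} φ(w) g(w/x)/g(1/x) dw`; Potter's bound `g(wy)/g(y) ≤ e^ε w^{-α-1}(w^ε + w^{-ε})`
dominates the integrand by an integrable function, so dominated convergence gives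
`J(x) ~ C·D(x)` with `C = ∫₀^∞ φ(w) w^{-α-1} dw > 0`, and `D` is regularly varying of index `α`
at `0`. Potter's bound itself comes from the uniform convergence theorem for the additive form
`h(u) = log g(eᵘ) + (α+1)u`, which is proved with Egorov's theorem.
-/

lemma exists_mem_add_mem_of_volume_gt {s : Set ℝ} (hs : MeasurableSet s) (hs02 : s ⊆ Icc 0 2)
    (hvol : ENNReal.ofReal (3 / 2) < volume s) {t : ℝ} (ht : t ∈ Icc (0 : ℝ) 1) :
    ∃ r ∈ s, t + r ∈ s := by
  by_contra! h
  have hdisj : Disjoint s ((t + ·) ⁻¹' s) := disjoint_left.2 fun r hr hr' => h r hr hr'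
  have hsub : s ∪ (t + ·) ⁻¹' s ⊆ Icc (-1) 2 := by
    rintro r (hr | hr) <;> have := hs02 hr <;> simp only [mem_Icc, mem_preimage] at * <;>
      constructor <;> linarith
  have hle : volume s + volume s ≤ ENNReal.ofReal 3 :=
    calc volume s + volume s = volume (s ∪ (t + ·) ⁻¹' s) := by
          rw [measure_union hdisj (hs.preimage (measurable_const_add t)), measure_preimage_add]
      _ ≤ volume (Icc (-1 : ℝ) 2) := measure_mono hsub
      _ = ENNReal.ofReal 3 := by rw [Real.volume_Icc]; norm_num
  have hlt := ENNReal.add_lt_add hvol hvol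
  rw [← ENNReal.ofReal_add (by norm_num) (by norm_num), show (3 / 2 : ℝ) + 3 / 2 = 3 by norm_num]
    at hlt
  exact hlt.not_ge hle

lemma tendstoUniformlyOn_add_sub {h : ℝ → ℝ} (hmeas : Measurable h)
    (hlim : ∀ t, Tendsto (fun u => h (u + t) - h u) atTop (𝓝 0)) :
    TendstoUniformlyOn (fun u t => h (u + t) - h u) 0 atTop (Icc 0 1) := by
  rw [Metric.tendstoUniformlyOn_iff]
  intro ε hε
  by_contra hcon
  obtain ⟨u, hu, hbad⟩ := frequently_iff_seq_forall.mp (not_eventually.mp hcon)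
  simp only [not_forall, not_lt, Pi.zero_apply, dist_zero_left, norm_eq_abs] at hbad
  choose t ht hbig using hbad
  set H : ℕ → ℝ → ℝ := fun n s => |h (u n + s) - h (u n)| + |h (u n + t n + s) - h (u n + t n)|
  have hut : Tendsto (fun n => u n + t n) atTop atTop :=
    tendsto_atTop_mono (fun n => le_add_of_nonneg_right (ht n).1) hu
  have hH : ∀ s, Tendsto (fun n => H n s) atTop (𝓝 0) := fun s => by
    simpa using ((hlim s).comp hu).abs.add ((hlim s).comp hut).abs
  have hHmeas : ∀ n, StronglyMeasurable (H n) := fun n => by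
    refine Measurable.stronglyMeasurable ?_
    fun_prop
  obtain ⟨E, hE02, hEmeas, hEvol, hunif⟩ :=
    tendstoUniformlyOn_of_ae_tendsto hHmeas stronglyMeasurable_const measurableSet_Icc
      (measure_Icc_lt_top (μ := volume)).ne (ae_of_all _ fun s _ => hH s)
      (by norm_num : (0 : ℝ) < 1 / 4)
  have hvol : ENNReal.ofReal (3 / 2) < volume (Icc 0 2 \ E) := by
    calc ENNReal.ofReal (3 / 2) < ENNReal.ofReal (2 - 1 / 4) :=
          (ENNReal.ofReal_lt_ofReal_iff (by norm_num)).mpr (by norm_num)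
      _ ≤ volume (Icc (0 : ℝ) 2) - volume E := by
          rw [ENNReal.ofReal_sub _ (by norm_num), Real.volume_Icc, sub_zero]
          exact tsub_le_tsub_left hEvol _
      _ ≤ volume (Icc 0 2 \ E) := le_measure_sdiff
  obtain ⟨n, hn⟩ := ((Metric.tendstoUniformlyOn_iff.mp hunif) (ε / 2) (half_pos hε)).exists
  obtain ⟨r, hr, htr⟩ := exists_mem_add_mem_of_volume_gt (measurableSet_Icc.diff hEmeas)
    sdiff_subset hvol (ht n)
  -- `h (u n + t n) - h (u n)` is the difference of two increments that are small on the good set.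
  have h₁ := hn (t n + r) htr
  have h₂ := hn r hr
  simp only [dist_zero_left, norm_eq_abs, H] at h₁ h₂
  rw [abs_of_nonneg (by positivity)] at h₁ h₂
  have htri : |h (u n + t n) - h (u n)| ≤
      |h (u n + t n + r) - h (u n + t n)| + |h (u n + (t n + r)) - h (u n)| := by
    rw [← add_assoc, abs_sub_comm (h (u n + t n + r)) (h (u n + t n))]
    exact abs_sub_le _ _ _
  linarith [hbig n, abs_nonneg (h (u n + r) - h (u n)),
    abs_nonneg (h (u n + t n + (t n + r)) - h (u n + t n))]

lemma abs_sub_le_of_forall_mem_Icc {h : ℝ → ℝ} {U ε : ℝ} (hε : 0 ≤ ε)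
    (hU : ∀ u ≥ U, ∀ t ∈ Icc (0 : ℝ) 1, |h (u + t) - h u| ≤ ε) {a b : ℝ} (ha : U ≤ a)
    (hb : U ≤ b) : |h a - h b| ≤ ε * (|a - b| + 1) := by
  wlog hba : b ≤ a generalizing a b
  · rw [abs_sub_comm, abs_sub_comm a]; exact this hb ha (le_of_not_ge hba)
  have chain : ∀ n : ℕ, ∀ u ≥ U, ∀ T ∈ Icc (0 : ℝ) (n + 1), |h (u + T) - h u| ≤ ε * (n + 1) := by
    intro n
    induction n with
    | zero => intro u hu T hT; simpa using hU u hu T (by simpa using hT)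
    | succ n ih =>
      intro u hu T hT
      rcases le_total T 1 with hT1 | hT1
      · exact (hU u hu T ⟨hT.1, hT1⟩).trans (by push_cast; nlinarith [n.cast_nonneg (α := ℝ)])
      · have step := ih (u + 1) (by linarith) (T - 1)
          ⟨by linarith, by push_cast at hT; linarith [hT.2]⟩
        rw [add_add_sub_cancel] at step
        calc |h (u + T) - h u| ≤ |h (u + T) - h (u + 1)| + |h (u + 1) - h u| := abs_sub_le _ _ _
          _ ≤ ε * (n + 1) + ε := add_le_add step (hU u hu 1 ⟨zero_le_one, le_rfl⟩)
          _ = ε * ((n + 1 : ℕ) + 1) := by push_cast; ring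
  have hT : 0 ≤ a - b := sub_nonneg.mpr hba
  have := chain ⌊a - b⌋₊ b hb (a - b) ⟨hT, (Nat.lt_floor_add_one _).le⟩
  rw [add_sub_cancel] at this
  rw [abs_of_nonneg hT]
  exact this.trans (mul_le_mul_of_nonneg_left (by linarith [Nat.floor_le hT]) hε)

lemma exp_mul_abs_log_le {w : ℝ} (hw : 0 < w) (ε : ℝ) :
    exp (ε * |log w|) ≤ w ^ ε + w ^ (-ε) := by
  rw [rpow_def_of_pos hw, rpow_def_of_pos hw]
  rcases abs_cases (log w) with ⟨h, -⟩ | ⟨h, -⟩ <;> rw [h]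
  · rw [mul_comm ε]; linarith [exp_pos (log w * -ε)]
  · rw [mul_neg, ← neg_mul, mul_comm]; linarith [exp_pos (log w * ε)]

lemma tendsto_log_comp_exp_increment {g : ℝ → ℝ} {ρ Y₀ : ℝ} (hpos : ∀ y ≥ Y₀, 0 < g y)
    (hreg : ∀ b > 0, Tendsto (fun y => g (b * y) / g y) atTop (𝓝 (b ^ ρ))) (t : ℝ) :
    Tendsto (fun u => (log (g (exp (u + t))) - ρ * (u + t)) - (log (g (exp u)) - ρ * u)) atTop
      (𝓝 0) := by
  have hlog : Tendsto (fun u => log (g (exp t * exp u) / g (exp u)) - ρ * t) atTop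
      (𝓝 (log (exp t ^ ρ) - ρ * t)) :=
    (((continuousAt_log (rpow_pos_of_pos (exp_pos t) ρ).ne').tendsto.comp
      ((hreg _ (exp_pos t)).comp tendsto_exp_atTop))).sub_const _
  rw [log_rpow (exp_pos t), log_exp, sub_self] at hlog
  refine hlog.congr' ?_
  filter_upwards [tendsto_exp_atTop.eventually (eventually_ge_atTop Y₀),
    (tendsto_exp_atTop.comp (tendsto_atTop_add_const_right _ t tendsto_id)).eventually
      (eventually_ge_atTop Y₀)] with u hu hut
  have hut' : Y₀ ≤ exp t * exp u := by simpa [← exp_add, add_comm] using hut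
  rw [log_div (hpos _ hut').ne' (hpos _ hu).ne', exp_add, mul_comm (exp u)]
  ring

lemma potter_bound {g : ℝ → ℝ} {ρ ε Y₀ : ℝ} (hmeas : Measurable g) (hpos : ∀ y ≥ Y₀, 0 < g y)
    (hreg : ∀ b > 0, Tendsto (fun y => g (b * y) / g y) atTop (𝓝 (b ^ ρ))) (hε : 0 < ε) :
    ∃ Y > 0, Y₀ ≤ Y ∧ ∀ y ≥ Y, ∀ w > 0, Y ≤ w * y →
      g (w * y) ≤ exp ε * w ^ ρ * (w ^ ε + w ^ (-ε)) * g y := by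
  set h : ℝ → ℝ := fun u => log (g (exp u)) - ρ * u
  have hlim : ∀ t, Tendsto (fun u => h (u + t) - h u) atTop (𝓝 0) :=
    tendsto_log_comp_exp_increment hpos hreg
  obtain ⟨U, hU⟩ : ∃ U, ∀ u ≥ U, ∀ t ∈ Icc (0 : ℝ) 1, |h (u + t) - h u| ≤ ε := by
    obtain ⟨U, hU⟩ := (Metric.tendstoUniformlyOn_iff.mp
      (tendstoUniformlyOn_add_sub ((hmeas.comp measurable_exp).log.sub (by fun_prop)) hlim) ε
      hε).exists_forall_of_atTop
    refine ⟨U, fun u hu t ht => ?_⟩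
    have := (hU u hu t ht).le
    rwa [Pi.zero_apply, dist_zero_left, Real.norm_eq_abs] at this
  refine ⟨max (exp U) Y₀, lt_max_of_lt_left (exp_pos U), le_max_right _ _, ?_⟩
  intro y hy w hw hwy
  have hy0 : 0 < y := (exp_pos U).trans_le ((le_max_left _ _).trans hy)
  have hwy0 : 0 < w * y := mul_pos hw hy0
  have hgy := hpos y ((le_max_right _ _).trans hy)
  have hgwy := hpos _ ((le_max_right _ _).trans hwy)
  have key := abs_sub_le_of_forall_mem_Icc hε.le hU
    ((le_log_iff_exp_le hwy0).mpr ((le_max_left _ _).trans hwy))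
    ((le_log_iff_exp_le hy0).mpr ((le_max_left _ _).trans hy))
  simp only [h] at key
  rw [exp_log hwy0, exp_log hy0, log_mul hw.ne' hy0.ne', add_sub_cancel_right] at key
  have hlog : log (g (w * y)) ≤ ε + ρ * log w + ε * |log w| + log (g y) := by
    linarith [(abs_le.mp key).2]
  calc g (w * y) = exp (log (g (w * y))) := (exp_log hgwy).symm
    _ ≤ exp ε * exp (log w * ρ) * exp (ε * |log w|) * exp (log (g y)) := by
        rw [← exp_add, ← exp_add, ← exp_add, exp_le_exp]; linarith
    _ ≤ exp ε * w ^ ρ * (w ^ ε + w ^ (-ε)) * g y := by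
        rw [exp_log hgy, ← rpow_def_of_pos hw]
        gcongr
        exact exp_mul_abs_log_le hw ε

noncomputable def compensatedExp (u : ℝ) : ℝ := exp (-u) - 1 + u

lemma compensatedExp_pos {u : ℝ} (hu : u ≠ 0) : 0 < compensatedExp u := by
  have := add_one_lt_exp (neg_ne_zero.mpr hu)
  unfold compensatedExp; linarith

lemma compensatedExp_nonneg (u : ℝ) : 0 ≤ compensatedExp u := by
  have := add_one_le_exp (-u)
  unfold compensatedExp; linarith

lemma compensatedExp_le_self {u : ℝ} (hu : 0 ≤ u) : compensatedExp u ≤ u := by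
  have := exp_le_one_iff.mpr (neg_nonpos.mpr hu)
  unfold compensatedExp; linarith

lemma compensatedExp_le_sq {u : ℝ} (hu : 0 ≤ u) : compensatedExp u ≤ u ^ 2 := by
  rcases le_total u 1 with hu1 | hu1
  · have := (abs_le.mp (abs_exp_sub_one_sub_id_le (x := -u)
      (by rwa [abs_neg, abs_of_nonneg hu]))).2
    unfold compensatedExp; nlinarith
  · exact (compensatedExp_le_self hu).trans (by nlinarith)

lemma sq_div_four_le_compensatedExp {u : ℝ} (hu : 0 ≤ u) (hu1 : u ≤ 1) :
    u ^ 2 / 4 ≤ compensatedExp u := by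
  have h : -(u ^ 3 * (4 / (6 * 3))) ≤ exp (-u) - (1 + -u + (-u) ^ 2 / 2) := by
    simpa [Finset.sum_range_succ, Nat.factorial, abs_of_nonneg hu] using
      (abs_le.mp (exp_bound (x := -u) (n := 3) (by rwa [abs_neg, abs_of_nonneg hu])
        (by norm_num))).1
  unfold compensatedExp
  nlinarith [pow_le_one₀ hu hu1 (n := 1)]

lemma continuous_compensatedExp : Continuous compensatedExp := by
  unfold compensatedExp; fun_prop

lemma compensatedExp_mul_le {x v : ℝ} (hx : 0 ≤ x) (hv : 0 ≤ v) :
    compensatedExp (x * v) ≤ max (x ^ 2) x * min (v ^ 2) v := by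
  have hxv := mul_nonneg hx hv
  rcases le_total v 1 with hv1 | hv1
  · rw [min_eq_left (by nlinarith)]
    calc compensatedExp (x * v) ≤ x ^ 2 * v ^ 2 := (compensatedExp_le_sq hxv).trans_eq (by ring)
      _ ≤ _ := by gcongr; exact le_max_left _ _
  · rw [min_eq_right (by nlinarith)]
    exact (compensatedExp_le_self hxv).trans (by gcongr; exact le_max_right _ _)

structure IsLevyDensity (g : ℝ → ℝ) : Prop where
  measurable : Measurable g
  nonneg : ∀ v > 0, 0 ≤ g v
  integrableOn : IntegrableOn (fun v => min (v ^ 2) v * g v) (Ioi 0)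

noncomputable def laplaceExponent (g : ℝ → ℝ) (x : ℝ) : ℝ :=
  ∫ v in Ioi 0, compensatedExp (x * v) * g v

namespace IsLevyDensity

variable {g : ℝ → ℝ}

lemma integrableOn_compensatedExp_mul (hg : IsLevyDensity g) {x : ℝ} (hx : 0 ≤ x) :
    IntegrableOn (fun v => compensatedExp (x * v) * g v) (Ioi 0) := by
  refine (hg.integrableOn.const_mul (max (x ^ 2) x)).mono'
    ((continuous_compensatedExp.measurable.comp (measurable_const_mul x)).mul
      hg.measurable).aestronglyMeasurable ?_
  filter_upwards [ae_restrict_mem measurableSet_Ioi] with v (hv : 0 < v)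
  rw [norm_of_nonneg (mul_nonneg (compensatedExp_nonneg _) (hg.nonneg v hv)), ← mul_assoc]
  exact mul_le_mul_of_nonneg_right (compensatedExp_mul_le hx hv.le) (hg.nonneg v hv)

lemma integrableOn_sq_mul (hg : IsLevyDensity g) (R : ℝ) :
    IntegrableOn (fun v => v ^ 2 * g v) (Ioc 0 R) := by
  refine ((hg.integrableOn.mono_set Ioc_subset_Ioi_self).const_mul (max R 1)).mono'
    ((measurable_id.pow_const 2).mul hg.measurable).aestronglyMeasurable ?_
  filter_upwards [ae_restrict_mem measurableSet_Ioc] with v ⟨hv0, hvR⟩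
  have hgv := hg.nonneg v hv0
  rw [norm_of_nonneg (by positivity), ← mul_assoc]
  refine mul_le_mul_of_nonneg_right ?_ hgv
  rcases le_total v 1 with hv1 | hv1
  · rw [min_eq_left (by nlinarith)]
    exact le_mul_of_one_le_left (sq_nonneg v) (le_max_right _ _)
  · rw [min_eq_right (by nlinarith)]
    nlinarith [le_max_left R 1]

lemma tendsto_integral_sq_mul_atTop (hg : IsLevyDensity g)
    (hinf : ∫⁻ v in Ioi 0, ENNReal.ofReal (v ^ 2 * g v) = ⊤) :
    Tendsto (fun R => ∫ v in Ioc 0 R, v ^ 2 * g v) atTop atTop := by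
  have hlint : Tendsto (fun R => ∫⁻ v in Ioc 0 R, ENNReal.ofReal (v ^ 2 * g v)) atTop (𝓝 ⊤) := by
    have := (aecover_Iic (μ := volume.restrict (Ioi (0 : ℝ))) tendsto_id
      ).lintegral_tendsto_of_countably_generated
        ((measurable_id.pow_const 2).mul hg.measurable).ennreal_ofReal.aemeasurable
    simpa only [Measure.restrict_restrict measurableSet_Iic, Iic_inter_Ioi, id, Pi.mul_apply, hinf]
      using this
  refine tendsto_atTop.mpr fun M =>
    (hlint.eventually (lt_mem_nhds (ENNReal.ofReal_lt_top (r := M)))).mono fun R hR => ?_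
  rw [← ofReal_integral_eq_lintegral_ofReal (hg.integrableOn_sq_mul R)] at hR
  · exact ((ENNReal.ofReal_lt_ofReal_iff'.mp hR).1).le
  · filter_upwards [ae_restrict_mem measurableSet_Ioc] with v hv
    exact mul_nonneg (sq_nonneg v) (hg.nonneg v hv.1)

lemma integral_Ioc_le_laplaceExponent (hg : IsLevyDensity g) {x : ℝ} (hx : 0 ≤ x) (R : ℝ) :
    ∫ v in Ioc 0 R, compensatedExp (x * v) * g v ≤ laplaceExponent g x :=
  setIntegral_mono_set (hg.integrableOn_compensatedExp_mul hx)
    ((ae_restrict_mem measurableSet_Ioi).mono fun v (hv : 0 < v) =>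
      mul_nonneg (compensatedExp_nonneg _) (hg.nonneg v hv))
    Ioc_subset_Ioi_self.eventuallyLE

lemma sq_mul_integral_le_laplaceExponent (hg : IsLevyDensity g) {x R : ℝ} (hx : 0 ≤ x)
    (hxR : x * R ≤ 1) : x ^ 2 / 4 * ∫ v in Ioc 0 R, v ^ 2 * g v ≤ laplaceExponent g x := by
  refine le_trans ?_ (hg.integral_Ioc_le_laplaceExponent hx R)
  rw [← integral_const_mul]
  refine setIntegral_mono_on ((hg.integrableOn_sq_mul R).const_mul _)
    ((hg.integrableOn_compensatedExp_mul hx).mono_set Ioc_subset_Ioi_self) measurableSet_Ioc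
    fun v ⟨hv0, hvR⟩ => ?_
  have hxv : x * v ≤ 1 := (mul_le_mul_of_nonneg_left hvR hx).trans hxR
  calc x ^ 2 / 4 * (v ^ 2 * g v) = (x * v) ^ 2 / 4 * g v := by ring
    _ ≤ _ := mul_le_mul_of_nonneg_right
        (sq_div_four_le_compensatedExp (mul_nonneg hx hv0.le) hxv) (hg.nonneg v hv0)

lemma tendsto_laplaceExponent_div_sq_atTop (hg : IsLevyDensity g)
    (hinf : ∫⁻ v in Ioi 0, ENNReal.ofReal (v ^ 2 * g v) = ⊤) :
    Tendsto (fun x => laplaceExponent g x / x ^ 2) (𝓝[>] 0) atTop := by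
  refine tendsto_atTop.mpr fun M => ?_
  obtain ⟨R, hRM, hR⟩ := ((tendsto_atTop.mp (hg.tendsto_integral_sq_mul_atTop hinf) (4 * M)).and
    (eventually_gt_atTop 0)).exists
  filter_upwards [Ioo_mem_nhdsGT (inv_pos.mpr hR)] with x ⟨hx0, hxR⟩
  rw [le_div_iff₀ (by positivity)]
  calc M * x ^ 2 ≤ x ^ 2 / 4 * ∫ v in Ioc 0 R, v ^ 2 * g v := by nlinarith [sq_nonneg x]
    _ ≤ laplaceExponent g x := hg.sq_mul_integral_le_laplaceExponent hx0.le
        ((lt_inv_mul_iff₀' hR).mp (by rwa [mul_one])).le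

lemma integral_Ioc_le_sq_mul (hg : IsLevyDensity g) {x : ℝ} (hx : 0 ≤ x) (R : ℝ) :
    ∫ v in Ioc 0 R, compensatedExp (x * v) * g v ≤ x ^ 2 * ∫ v in Ioc 0 R, v ^ 2 * g v := by
  rw [← integral_const_mul]
  refine setIntegral_mono_on
    ((hg.integrableOn_compensatedExp_mul hx).mono_set Ioc_subset_Ioi_self)
    ((hg.integrableOn_sq_mul R).const_mul _) measurableSet_Ioc fun v ⟨hv0, _⟩ => ?_
  calc compensatedExp (x * v) * g v ≤ (x * v) ^ 2 * g v :=
        mul_le_mul_of_nonneg_right (compensatedExp_le_sq (mul_nonneg hx hv0.le)) (hg.nonneg v hv0)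
    _ = x ^ 2 * (v ^ 2 * g v) := by ring

lemma tendsto_integral_Ioc_div_laplaceExponent (hg : IsLevyDensity g)
    (hinf : ∫⁻ v in Ioi 0, ENNReal.ofReal (v ^ 2 * g v) = ⊤) (R : ℝ) :
    Tendsto (fun x => (∫ v in Ioc 0 R, compensatedExp (x * v) * g v) / laplaceExponent g x)
      (𝓝[>] 0) (𝓝 0) := by
  have hJ := hg.tendsto_laplaceExponent_div_sq_atTop hinf
  have hB : ∀ x, 0 ≤ ∫ v in Ioc 0 R, compensatedExp (x * v) * g v := fun x =>
    setIntegral_nonneg measurableSet_Ioc fun v hv =>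
      mul_nonneg (compensatedExp_nonneg _) (hg.nonneg v hv.1)
  refine tendsto_of_tendsto_of_tendsto_of_le_of_le' tendsto_const_nhds
    ((tendsto_const_nhds (x := ∫ v in Ioc 0 R, v ^ 2 * g v)).div_atTop hJ) ?_ ?_
  · filter_upwards [self_mem_nhdsWithin] with x (hx : 0 < x)
    exact div_nonneg (hB x) ((hB x).trans (hg.integral_Ioc_le_laplaceExponent hx.le R))
  · filter_upwards [self_mem_nhdsWithin, hJ.eventually_gt_atTop 0] with x (hx : 0 < x) hJx
    have hJpos : 0 < laplaceExponent g x := by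
      simpa [div_pos_iff_of_pos_right (pow_pos hx 2)] using hJx
    rw [div_div_eq_mul_div, div_le_div_iff_of_pos_right hJpos, mul_comm]
    exact hg.integral_Ioc_le_sq_mul hx.le R

lemma laplaceExponent_eq_add (hg : IsLevyDensity g) {x R : ℝ} (hx : 0 ≤ x) (hR : 0 ≤ R) :
    laplaceExponent g x = (∫ v in Ioc 0 R, compensatedExp (x * v) * g v) +
      ∫ v in Ioi R, compensatedExp (x * v) * g v := by
  rw [laplaceExponent, ← Ioc_union_Ioi_eq_Ioi hR, setIntegral_union (Ioc_disjoint_Ioi le_rfl)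
    measurableSet_Ioi]
  exacts [(hg.integrableOn_compensatedExp_mul hx).mono_set Ioc_subset_Ioi_self,
    (hg.integrableOn_compensatedExp_mul hx).mono_set (Ioi_subset_Ioi hR)]

end IsLevyDensity

lemma integrableOn_compensatedExp_mul_rpow {β : ℝ} (hβ1 : 1 < β) (hβ2 : β < 2) :
    IntegrableOn (fun w => compensatedExp w * w ^ (-β - 1)) (Ioi 0) := by
  have hmeas : ∀ s ⊆ Ioi (0 : ℝ), MeasurableSet s →
      AEStronglyMeasurable (fun w => compensatedExp w * w ^ (-β - 1)) (volume.restrict s) :=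
    fun s hs hsm => ((continuous_compensatedExp.continuousOn.mul
      (continuousOn_id.rpow_const fun x hx => Or.inl (ne_of_gt hx))).mono hs).aestronglyMeasurable
        hsm
  rw [← Ioc_union_Ioi_eq_Ioi zero_le_one]
  refine IntegrableOn.union ?_ ?_
  · rw [integrableOn_Ioc_iff_integrableOn_Ioo]
    refine ((intervalIntegral.integrableOn_Ioo_rpow_iff zero_lt_one).mpr
      (by linarith : -1 < 1 - β)).mono' (hmeas _ (fun w hw => hw.1) measurableSet_Ioo) ?_
    filter_upwards [ae_restrict_mem measurableSet_Ioo] with w ⟨hw0, _⟩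
    rw [norm_of_nonneg (mul_nonneg (compensatedExp_nonneg w) (rpow_nonneg hw0.le _))]
    calc compensatedExp w * w ^ (-β - 1) ≤ w ^ (2 : ℝ) * w ^ (-β - 1) := by
          rw [rpow_two]; gcongr; exact compensatedExp_le_sq hw0.le
      _ = w ^ (1 - β) := by rw [← rpow_add hw0]; ring_nf
  · refine (integrableOn_Ioi_rpow_of_lt (by linarith : -β < -1) zero_lt_one).mono'
      (hmeas _ (Ioi_subset_Ioi zero_le_one) measurableSet_Ioi) ?_
    filter_upwards [ae_restrict_mem measurableSet_Ioi] with w (hw : 1 < w)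
    have hw0 : 0 < w := zero_lt_one.trans hw
    rw [norm_of_nonneg (mul_nonneg (compensatedExp_nonneg w) (rpow_nonneg hw0.le _))]
    calc compensatedExp w * w ^ (-β - 1) ≤ w ^ (1 : ℝ) * w ^ (-β - 1) := by
          rw [rpow_one]; gcongr; exact compensatedExp_le_self hw0.le
      _ = w ^ (-β) := by rw [← rpow_add hw0]; ring_nf

lemma integral_compensatedExp_mul_rpow_pos {β : ℝ} (hβ1 : 1 < β) (hβ2 : β < 2) :
    0 < ∫ w in Ioi 0, compensatedExp w * w ^ (-β - 1) := by
  rw [setIntegral_pos_iff_support_of_nonneg_ae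
    ((ae_restrict_mem measurableSet_Ioi).mono fun w (hw : 0 < w) =>
      mul_nonneg (compensatedExp_nonneg w) (rpow_nonneg hw.le _))
    (integrableOn_compensatedExp_mul_rpow hβ1 hβ2)]
  have : Ioi (0 : ℝ) ⊆ Function.support (fun w => compensatedExp w * w ^ (-β - 1)) ∩ Ioi 0 :=
    fun w (hw : 0 < w) =>
      ⟨(mul_pos (compensatedExp_pos hw.ne') (rpow_pos_of_pos hw _)).ne', hw⟩
  exact (measure_mono this).trans_lt' (by simp)

lemma integral_Ioi_div_eq_integral_indicator (g : ℝ → ℝ) {x Y : ℝ} (hx : 0 < x) (hY : 0 ≤ Y) :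
    (∫ v in Ioi Y, compensatedExp (x * v) * g v) / (x⁻¹ * g x⁻¹) =
      ∫ w in Ioi 0, (Ioi (x * Y)).indicator
        (fun w => compensatedExp w * (g (x⁻¹ * w) / g x⁻¹)) w := by
  have hsub := integral_comp_mul_left_Ioi (fun w => compensatedExp w * g (x⁻¹ * w)) Y hx
  simp only [inv_mul_cancel_left₀ hx.ne', smul_eq_mul] at hsub
  rw [hsub, setIntegral_indicator measurableSet_Ioi, Ioi_inter_Ioi,
    sup_eq_right.mpr (by positivity : 0 ≤ x * Y)]
  simp only [← mul_div_assoc]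
  rw [integral_div, mul_div_mul_left _ _ (inv_ne_zero hx.ne')]

lemma tendsto_integral_Ioi_div_of_potter {g : ℝ → ℝ} {α ε Y : ℝ} (hmeas : Measurable g)
    (hY : 0 < Y) (hpos : ∀ y ≥ Y, 0 < g y) (hε : 0 ≤ ε) (hαε : 1 < α - ε) (hαε' : α + ε < 2)
    (hpotter : ∀ y ≥ Y, ∀ w > 0, Y ≤ w * y →
      g (w * y) ≤ exp ε * w ^ (-α - 1) * (w ^ ε + w ^ (-ε)) * g y)
    (hreg : ∀ b > 0, Tendsto (fun y => g (b * y) / g y) atTop (𝓝 (b ^ (-α - 1)))) :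
    Tendsto (fun x => (∫ v in Ioi Y, compensatedExp (x * v) * g v) / (x⁻¹ * g x⁻¹)) (𝓝[>] 0)
      (𝓝 (∫ w in Ioi 0, compensatedExp w * w ^ (-α - 1))) := by
  set bound : ℝ → ℝ := fun w =>
    exp ε * (compensatedExp w * w ^ (-(α - ε) - 1) + compensatedExp w * w ^ (-(α + ε) - 1))
  refine (tendsto_integral_filter_of_dominated_convergence bound ?meas ?le ?integrable ?lim).congr'
    (eventually_mem_nhdsWithin.mono fun x (hx : 0 < x) =>
      (integral_Ioi_div_eq_integral_indicator g hx hY.le).symm)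
  case meas =>
    exact Eventually.of_forall fun x => (Measurable.indicator
      (continuous_compensatedExp.measurable.mul ((hmeas.comp (measurable_const_mul _)).div_const _))
      measurableSet_Ioi).aestronglyMeasurable
  case integrable =>
    exact ((integrableOn_compensatedExp_mul_rpow hαε (by linarith)).add
      (integrableOn_compensatedExp_mul_rpow (by linarith) hαε')).const_mul _
  case le =>
    filter_upwards [Ioo_mem_nhdsGT (inv_pos.mpr hY)] with x ⟨hx0, hxY⟩
    filter_upwards [ae_restrict_mem measurableSet_Ioi] with w (hw : 0 < w)
    have hYx : Y ≤ x⁻¹ := ((lt_inv_comm₀ hx0 hY).mp hxY).le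
    by_cases hwx : w ∈ Ioi (x * Y)
    · rw [indicator_of_mem hwx]
      have hgx := hpos _ hYx
      have hYw : Y ≤ w * x⁻¹ := (le_mul_inv_iff₀ hx0).mpr (by linarith [mem_Ioi.mp hwx])
      have hratio : g (x⁻¹ * w) / g x⁻¹ ≤ exp ε * w ^ (-α - 1) * (w ^ ε + w ^ (-ε)) := by
        rw [div_le_iff₀ hgx, mul_comm x⁻¹]; exact hpotter _ hYx w hw hYw
      have hnn : 0 ≤ g (x⁻¹ * w) / g x⁻¹ :=
        div_nonneg (hpos _ (by rwa [mul_comm])).le hgx.le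
      rw [norm_of_nonneg (mul_nonneg (compensatedExp_nonneg w) hnn)]
      calc compensatedExp w * (g (x⁻¹ * w) / g x⁻¹)
          ≤ compensatedExp w * (exp ε * w ^ (-α - 1) * (w ^ ε + w ^ (-ε))) :=
            mul_le_mul_of_nonneg_left hratio (compensatedExp_nonneg w)
        _ = bound w := by
            simp only [bound, show -(α - ε) - 1 = -α - 1 + ε by ring,
              show -(α + ε) - 1 = -α - 1 + -ε by ring, rpow_add hw]
            ring
    · rw [indicator_of_notMem hwx, norm_zero]
      have := compensatedExp_nonneg w
      have := rpow_nonneg hw.le (-(α - ε) - 1)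
      have := rpow_nonneg hw.le (-(α + ε) - 1)
      positivity
  case lim =>
    filter_upwards [ae_restrict_mem measurableSet_Ioi] with w (hw : 0 < w)
    refine (((hreg w hw).comp tendsto_inv_nhdsGT_zero).const_mul (compensatedExp w)).congr' ?_
    filter_upwards [Ioo_mem_nhdsGT (div_pos hw hY)] with x ⟨_, hxw⟩
    rw [indicator_of_mem (show w ∈ Ioi (x * Y) from (lt_div_iff₀ hY).mp hxw), mul_comm x⁻¹]
    rfl

lemma IsLevyDensity.tendsto_laplaceExponent_div {g : ℝ → ℝ} (hg : IsLevyDensity g)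
    (hinf : ∫⁻ v in Ioi 0, ENNReal.ofReal (v ^ 2 * g v) = ⊤) {Y₀ α : ℝ}
    (hpos : ∀ y ≥ Y₀, 0 < g y) (hα1 : 1 < α) (hα2 : α < 2)
    (hreg : ∀ b > 0, Tendsto (fun y => g (b * y) / g y) atTop (𝓝 (b ^ (-α - 1)))) :
    Tendsto (fun x => laplaceExponent g x / (x⁻¹ * g x⁻¹)) (𝓝[>] 0)
      (𝓝 (∫ w in Ioi 0, compensatedExp w * w ^ (-α - 1))) := by
  obtain ⟨ε, hε, hαε, hαε'⟩ : ∃ ε > 0, 1 < α - ε ∧ α + ε < 2 :=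
    ⟨min (α - 1) (2 - α) / 2, by positivity, by linarith [min_le_left (α - 1) (2 - α)],
      by linarith [min_le_right (α - 1) (2 - α)]⟩
  obtain ⟨Y, hY, hY₀Y, hpotter⟩ := potter_bound hg.measurable hpos hreg hε
  have hposY : ∀ y ≥ Y, 0 < g y := fun y hy => hpos y (hY₀Y.trans hy)
  have hAD := tendsto_integral_Ioi_div_of_potter hg.measurable hY hposY hε.le hαε hαε' hpotter hreg
  have hBJ := hg.tendsto_integral_Ioc_div_laplaceExponent hinf Y
  have hC := integral_compensatedExp_mul_rpow_pos hα1 hα2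
  -- With `B`, `A` the parts of `J` over `(0, Y]` and `(Y, ∞)`: `J / D = (A / D) * (1 - B / J)⁻¹`.
  have hlim := hAD.mul ((tendsto_const_nhds.sub hBJ).inv₀ (by norm_num : (1 : ℝ) - 0 ≠ 0))
  rw [sub_zero, inv_one, mul_one] at hlim
  refine hlim.congr' ?_
  filter_upwards [eventually_mem_nhdsWithin, hAD.eventually (lt_mem_nhds hC),
    Ioo_mem_nhdsGT (inv_pos.mpr hY)] with x (hx : 0 < x) hADx ⟨_, hxY⟩
  have hD : 0 < x⁻¹ * g x⁻¹ :=
    mul_pos (inv_pos.mpr hx) (hposY _ ((lt_inv_comm₀ hx hY).mp hxY).le)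
  have hA := (div_pos_iff_of_pos_right hD).mp hADx
  have hB : 0 ≤ ∫ v in Ioc 0 Y, compensatedExp (x * v) * g v :=
    setIntegral_nonneg measurableSet_Ioc fun v hv =>
      mul_nonneg (compensatedExp_nonneg _) (hg.nonneg v hv.1)
  have hsplit := hg.laplaceExponent_eq_add hx.le hY.le
  have hJ : 0 < laplaceExponent g x := hsplit ▸ add_pos_of_nonneg_of_pos hB hA
  rw [one_sub_div hJ.ne', inv_div, hsplit, add_sub_cancel_left]
  field_simp

lemma tendsto_inv_mul_comp_inv_div {g : ℝ → ℝ} {ρ b : ℝ}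
    (hreg : ∀ b > 0, Tendsto (fun y => g (b * y) / g y) atTop (𝓝 (b ^ ρ))) (hb : 0 < b) :
    Tendsto (fun x => (b * x)⁻¹ * g (b * x)⁻¹ / (x⁻¹ * g x⁻¹)) (𝓝[>] 0) (𝓝 (b ^ (-ρ - 1))) := by
  have h := ((hreg b⁻¹ (inv_pos.mpr hb)).comp tendsto_inv_nhdsGT_zero).const_mul b⁻¹
  rw [← rpow_neg_one b, ← rpow_mul hb.le, ← rpow_add hb, show -1 + -1 * ρ = -ρ - 1 by ring] at h
  refine h.congr' (eventually_mem_nhdsWithin.mono fun x (hx : 0 < x) => ?_)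
  simp only [Function.comp, mul_inv, rpow_neg_one]
  field_simp

/-- If the Lévy density `g` on `(0,∞)` satisfies `∫ (v² ∧ v) g(v) dv < ∞`,
`∫ v² g(v) dv = ∞`, is eventually positive, and varies regularly at `+∞` with index
`−α−1` for some `α ∈ (1,2)`, then the Laplace exponent
`J(b) = ∫ (e^{−bv} − 1 + bv) g(v) dv` varies regularly at `0` with index `α`. -/
theorem stmt11 (g : ℝ → ℝ) (hgmeas : Measurable g) (hgnn : ∀ v > (0:ℝ), 0 ≤ g v)
    (hint : IntegrableOn (fun v => min (v ^ 2) v * g v) (Set.Ioi 0))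
    (hinf : ∫⁻ v in Set.Ioi (0:ℝ), ENNReal.ofReal (v ^ 2 * g v) = ⊤)
    (hgpos : ∃ Y : ℝ, ∀ y ≥ Y, 0 < g y)
    (J : ℝ → ℝ)
    (hJ : ∀ b ≥ (0:ℝ),
      J b = ∫ v in Set.Ioi (0:ℝ), (Real.exp (-(b * v)) - 1 + b * v) * g v)
    (α : ℝ) (hα : α ∈ Set.Ioo (1:ℝ) 2)
    (hreg : ∀ b > (0:ℝ), Tendsto (fun y => g (b * y) / g y) atTop (nhds (b ^ (-α - 1)))) :
    ∀ b > (0:ℝ), Tendsto (fun x => J (b * x) / J x) (nhdsWithin 0 (Set.Ioi 0))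
      (nhds (b ^ α)) := by
  intro b hb
  obtain ⟨Y, hY⟩ := hgpos
  have hJD := IsLevyDensity.tendsto_laplaceExponent_div ⟨hgmeas, hgnn, hint⟩ hinf hY hα.1 hα.2 hreg
  have hC := integral_compensatedExp_mul_rpow_pos hα.1 hα.2
  have hbx : Tendsto (b * ·) (𝓝[>] 0) (𝓝[>] 0) :=
    tendsto_comap.mono_left (comap_mulLeft_nhdsGT_zero hb).ge
  have hDD := tendsto_inv_mul_comp_inv_div hreg hb
  rw [show -(-α - 1) - 1 = α by ring] at hDD
  have hlim := ((hJD.comp hbx).mul hDD).div hJD hC.ne'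
  rw [mul_div_cancel_left₀ _ hC.ne'] at hlim
  have hD : ∀ᶠ x in 𝓝[>] 0, x⁻¹ * g x⁻¹ ≠ 0 :=
    (eventually_mem_nhdsWithin.and
      (tendsto_inv_nhdsGT_zero.eventually (eventually_ge_atTop Y))).mono
      fun x ⟨(hx : 0 < x), hxY⟩ => mul_ne_zero (inv_ne_zero hx.ne') (hY _ hxY).ne'
  have hJ' : ∀ x > 0, J x = laplaceExponent g x := fun x hx => hJ x hx.le
  refine hlim.congr' ?_
  filter_upwards [eventually_mem_nhdsWithin, hD, hbx.eventually hD] with x (hx : 0 < x) hDx hDbx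
  simp only [Pi.div_apply, Function.comp, hJ' _ hx, hJ' _ (mul_pos hb hx)]
  rw [div_mul_div_cancel₀ hDbx, div_div_div_cancel_right₀ hDx]
end
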